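/- Let ℓ ≥ 0 be an integer, set ρ_j = ℓ/2 + 1 − j for j = 1,…,ℓ+1, let λ = (λ_1,…,λ_{ℓ+1}) ∈ ℝ^{ℓ+1}, and let s ∈ ℂ with Im s < 0. Then the integral over t = (t_1,…,t_{ℓ+1}) ∈ ℝ^{ℓ+1} and over the ℓ(ℓ+1)/2 variables n_{ij} (1 ≤ j < i ≤ ℓ+1) 2^{ℓ+1} ∫_{ℝ^{ℓ+1}} ∫_{ℝ^{ℓ(ℓ+1)/2}} exp( Σ_{1≤i<j≤ℓ+1}(t_i − t_j) + (is + ℓ/2) Σ_{j=1}^{ℓ+1} t_j + Σ_{j=1}^{ℓ+1}(iλ_j − ρ_j) t_j − π Σ_{j=1}^{ℓ+1} e^{2t_j} − π Σ_{1≤j<i≤ℓ+1} n_{ij}² e^{2t_j} ) Π dn_{ij} Π dt_j converges absolutely and equals Π_{j=1}^{ℓ+1} π^{−(is+iλ_j)/2} Γ( (is + iλ_j)/2 ), the local Archimedean L-factor L(s, −λ). -/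

import Mathlib

/-!
The exponent separates. The modular shift `Σ_{i<j}(t_i - t_j)`, together with
`(ℓ/2) Σ t_j - Σ ρ_j t_j`, leaves exactly one `t_j` for every entry `n_{ij}` of column `j`, and
`e^{t_j - π n_{ij}² e^{2 t_j}}` is the centred Gaussian density of variance `(2π e^{2 t_j})⁻¹` in
`n_{ij}`; so by Fubini the `n`-integral is `1`. What remains is a product of one-variable
integrals `∫ e^{c τ - π e^{2τ}} dτ` with `Re c = -Im s > 0`, which the substitution
`u = π e^{2τ}` turns into `½ π^{-c/2} Γ(c/2)`.
-/

open MeasureTheory Finset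

/-- Index set of the lower-triangular entries `n_{ij}`, `1 ≤ j < i ≤ ℓ+1`. -/
abbrev LowerIdx (ℓ : ℕ) := {p : Fin (ℓ+1) × Fin (ℓ+1) // p.2 < p.1}

open ProbabilityTheory
open scoped NNReal

theorem Fin.sum_sum_Ioi_eq_sum_val_nsmul {M : Type*} [AddCommMonoid M] {n : ℕ} (x : Fin n → M) :
    ∑ i, ∑ j ∈ Ioi i, x j = ∑ j : Fin n, (j : ℕ) • x j := by
  rw [Finset.sum_comm' (t' := univ) (s' := fun j => Iio j) (by simp)]
  simp [Finset.sum_const, Fin.card_Iio]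

theorem LowerIdx.sum_col_eq_sum_sum_Ioi {M : Type*} [AddCommMonoid M] {ℓ : ℕ}
    (x : Fin (ℓ+1) → M) :
    ∑ q : LowerIdx ℓ, x q.1.2 = ∑ j, ∑ _i ∈ Ioi j, x j := by
  calc ∑ q : LowerIdx ℓ, x q.1.2
      = ∑ p ∈ {p : Fin (ℓ+1) × Fin (ℓ+1) | p.2 < p.1}, x p.2 :=
        (Finset.sum_subtype _ (fun _ => mem_filter_univ _)
          (fun p : Fin (ℓ+1) × Fin (ℓ+1) => x p.2)).symm
    _ = ∑ j, ∑ _i ∈ Ioi j, x j :=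
        Finset.sum_finset_product_right' (f := fun _ j => x j) _ univ (fun j => Ioi j) (by simp)

/-- Indices start at `0`: here `ρ_j = ℓ/2 - j`, and column `j` has `ℓ - j` entries below the
diagonal. -/
theorem baxter_exponent_eq (ℓ : ℕ) (s : ℂ) (lam t : Fin (ℓ+1) → ℝ) (n : LowerIdx ℓ → ℝ) :
    (∑ i : Fin (ℓ+1), ∑ j ∈ Ioi i, ((t i - t j : ℝ) : ℂ))
        + (Complex.I * s + (ℓ : ℂ)/2) * (∑ j : Fin (ℓ+1), (t j : ℂ))
        + (∑ j : Fin (ℓ+1),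
            (Complex.I * (lam j) - ((ℓ : ℂ)/2 + 1 - ((j : ℕ) + 1))) * (t j : ℂ))
        - (Real.pi : ℂ) * ∑ j : Fin (ℓ+1), (Real.exp (2 * t j) : ℂ)
        - (Real.pi : ℂ) * ∑ q : LowerIdx ℓ, (n q : ℂ)^2 * (Real.exp (2 * t q.1.2) : ℂ)
      = ∑ q : LowerIdx ℓ, ((t q.1.2 : ℂ) - Real.pi * (n q : ℂ)^2 * (Real.exp (2 * t q.1.2) : ℂ))
        + ∑ j, ((Complex.I * s + Complex.I * lam j) * t j - Real.pi * (Real.exp (2 * t j) : ℂ)) := by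
  have h_modular : ∑ i : Fin (ℓ+1), ∑ j ∈ Ioi i, ((t i - t j : ℝ) : ℂ)
      = ∑ q : LowerIdx ℓ, (t q.1.2 : ℂ) - ∑ j : Fin (ℓ+1), (j : ℕ) • (t j : ℂ) := by
    simp only [Complex.ofReal_sub, sum_sub_distrib]
    rw [LowerIdx.sum_col_eq_sum_sum_Ioi (fun j => (t j : ℂ)), Fin.sum_sum_Ioi_eq_sum_val_nsmul]
  rw [h_modular]
  simp only [sum_add_distrib, sum_sub_distrib, mul_sum, nsmul_eq_mul, add_mul, sub_mul, mul_assoc]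
  ring

section ExpSubstitution

variable {E : Type*} [NormedAddCommGroup E] [NormedSpace ℝ E]

theorem integral_exp_smul_comp_exp (g : ℝ → E) :
    ∫ x, Real.exp x • g (Real.exp x) = ∫ y in Set.Ioi 0, g y := by
  rw [← Real.range_exp, ← Set.image_univ, integral_image_eq_integral_abs_deriv_smul
    MeasurableSet.univ (fun x _ => (Real.hasDerivAt_exp x).hasDerivWithinAt)
    Real.exp_injective.injOn g]
  simp [abs_of_pos (Real.exp_pos _)]

theorem integrable_exp_smul_comp_exp_iff (g : ℝ → E) :
    Integrable (fun x => Real.exp x • g (Real.exp x)) ↔ IntegrableOn g (Set.Ioi 0) := by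
  rw [← Real.range_exp, ← Set.image_univ, integrableOn_image_iff_integrableOn_abs_deriv_smul
    MeasurableSet.univ (fun x _ => (Real.hasDerivAt_exp x).hasDerivWithinAt)
    Real.exp_injective.injOn g]
  simp [abs_of_pos (Real.exp_pos _)]

end ExpSubstitution

theorem cexp_mul_sub_exp_eq (b : ℂ) (x : ℝ) :
    Complex.exp (b * x - Real.exp x)
      = Real.exp x • ((Real.exp (-Real.exp x) : ℂ) * (Real.exp x : ℂ) ^ (b - 1)) := by
  rw [Complex.cpow_def_of_ne_zero (by exact_mod_cast (Real.exp_pos x).ne'),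
    ← Complex.ofReal_log (Real.exp_pos x).le, Real.log_exp, Complex.real_smul]
  push_cast
  rw [← Complex.exp_add, ← Complex.exp_add]
  ring_nf

theorem integrable_cexp_mul_sub_exp {b : ℂ} (hb : 0 < b.re) :
    Integrable (fun x : ℝ => Complex.exp (b * x - Real.exp x)) := by
  simp_rw [cexp_mul_sub_exp_eq]
  exact (integrable_exp_smul_comp_exp_iff _).2 (Complex.GammaIntegral_convergent hb)

theorem integral_cexp_mul_sub_exp {b : ℂ} (hb : 0 < b.re) :
    ∫ x : ℝ, Complex.exp (b * x - Real.exp x) = Complex.Gamma b := by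
  simp_rw [cexp_mul_sub_exp_eq]
  rw [integral_exp_smul_comp_exp (fun y : ℝ => (Real.exp (-y) : ℂ) * (y : ℂ) ^ (b - 1)),
    Complex.Gamma_eq_integral hb, Complex.GammaIntegral]

theorem cexp_mul_sub_mul_exp_two_mul_eq (c : ℂ) {a : ℝ} (ha : 0 < a) (τ : ℝ) :
    Complex.exp (c * τ - a * Real.exp (2 * τ))
      = Complex.exp (-(c / 2) * Real.log a) *
          Complex.exp (c / 2 * ↑(2 * τ + Real.log a) - Real.exp (2 * τ + Real.log a)) := by
  rw [← Complex.exp_add, Real.exp_add, Real.exp_log ha]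
  push_cast
  ring_nf

theorem integrable_cexp_mul_sub_mul_exp_two_mul {c : ℂ} (hc : 0 < c.re) {a : ℝ} (ha : 0 < a) :
    Integrable (fun τ : ℝ => Complex.exp (c * τ - a * Real.exp (2 * τ))) := by
  simp_rw [cexp_mul_sub_mul_exp_two_mul_eq c ha]
  have hc2 : 0 < (c / 2).re := by simpa using hc
  exact (((integrable_cexp_mul_sub_exp hc2).comp_add_right (Real.log a)).comp_mul_left'
    two_ne_zero).const_mul _

theorem two_mul_integral_cexp_mul_sub_mul_exp_two_mul {c : ℂ} (hc : 0 < c.re) {a : ℝ}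
    (ha : 0 < a) :
    2 * ∫ τ : ℝ, Complex.exp (c * τ - a * Real.exp (2 * τ))
      = Complex.exp (-(c / 2) * Real.log a) * Complex.Gamma (c / 2) := by
  have hc2 : 0 < (c / 2).re := by simpa using hc
  simp_rw [cexp_mul_sub_mul_exp_two_mul_eq c ha]
  rw [integral_const_mul, Measure.integral_comp_mul_left
    (fun x : ℝ => Complex.exp (c / 2 * ↑(x + Real.log a) - Real.exp (x + Real.log a))) 2,
    integral_add_right_eq_self
      (fun x : ℝ => Complex.exp (c / 2 * ↑x - Real.exp x)), integral_cexp_mul_sub_exp hc2]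
  norm_num [Complex.real_smul]
  ring

section ProductDensity

variable {α β E : Type*} [MeasurableSpace α] [MeasurableSpace β] {μ : Measure α} {ν : Measure β}
  [SFinite ν] [NormedAddCommGroup E] [NormedSpace ℝ E] {f : α → E} {g : α → β → ℝ}

theorem integrable_prod_smul_of_integral_eq_one (hf : Integrable f μ)
    (hg : AEStronglyMeasurable (Function.uncurry g) (μ.prod ν))
    (hg_nonneg : ∀ a b, 0 ≤ g a b) (hg_int : ∀ a, Integrable (g a) ν)
    (hg_one : ∀ a, ∫ b, g a b ∂ν = 1) :
    Integrable (fun p : α × β => g p.1 p.2 • f p.1) (μ.prod ν) := by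
  have hgf : AEStronglyMeasurable (fun p : α × β => g p.1 p.2 • f p.1) (μ.prod ν) :=
    hg.smul hf.aestronglyMeasurable.comp_fst
  refine (integrable_prod_iff hgf).2 ⟨.of_forall fun a => (hg_int a).smul_const (f a), ?_⟩
  have h_norm : ∀ a, ∫ b, ‖g a b • f a‖ ∂ν = ‖f a‖ := fun a => by
    simp_rw [norm_smul, Real.norm_of_nonneg (hg_nonneg a _)]
    rw [integral_mul_const, hg_one, one_mul]
  simpa only [h_norm] using hf.norm

theorem integral_prod_smul_of_integral_eq_one [SFinite μ] [CompleteSpace E]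
    (hf : Integrable f μ)
    (hg : AEStronglyMeasurable (Function.uncurry g) (μ.prod ν))
    (hg_nonneg : ∀ a b, 0 ≤ g a b) (hg_int : ∀ a, Integrable (g a) ν)
    (hg_one : ∀ a, ∫ b, g a b ∂ν = 1) :
    ∫ p, g p.1 p.2 • f p.1 ∂(μ.prod ν) = ∫ a, f a ∂μ := by
  rw [integral_prod _ (integrable_prod_smul_of_integral_eq_one hf hg hg_nonneg hg_int hg_one)]
  simp_rw [integral_smul_const, hg_one, one_smul]

end ProductDensity

section Gaussian

variable {ι : Type*} [Fintype ι] (m : ι → ℝ) (v : ι → ℝ≥0)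

theorem integrable_prod_gaussianPDFReal :
    Integrable (fun x : ι → ℝ => ∏ i, gaussianPDFReal (m i) (v i) (x i)) :=
  Integrable.fintype_prod fun i => integrable_gaussianPDFReal (m i) (v i)

theorem integral_prod_gaussianPDFReal_eq_one (hv : ∀ i, v i ≠ 0) :
    ∫ x : ι → ℝ, ∏ i, gaussianPDFReal (m i) (v i) (x i) = 1 := by
  rw [integral_fintype_prod_volume_eq_prod]
  exact Finset.prod_eq_one fun i _ => integral_gaussianPDFReal_eq_one (m i) (hv i)

end Gaussian

theorem gaussianPDFReal_zero_inv_two_pi_exp_two_mul (τ x : ℝ) :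
    gaussianPDFReal 0 (2 * Real.pi * Real.exp (2 * τ))⁻¹.toNNReal x
      = Real.exp (τ - Real.pi * x ^ 2 * Real.exp (2 * τ)) := by
  have hv : 0 ≤ (2 * Real.pi * Real.exp (2 * τ))⁻¹ := by positivity
  have hsqrt : √(2 * Real.pi * (2 * Real.pi * Real.exp (2 * τ))⁻¹) = Real.exp (-τ) := by
    rw [Real.sqrt_eq_iff_mul_self_eq_of_pos (Real.exp_pos _), ← Real.exp_add]
    field_simp
    rw [← Real.exp_add]; ring_nf; simp
  rw [gaussianPDFReal, Real.coe_toNNReal _ hv, hsqrt, ← Real.exp_neg, neg_neg, ← Real.exp_add]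
  congr 1
  field_simp
  ring

noncomputable def unipotentDensity (ℓ : ℕ) (t : Fin (ℓ+1) → ℝ) (n : LowerIdx ℓ → ℝ) : ℝ :=
  ∏ q : LowerIdx ℓ, gaussianPDFReal 0 (2 * Real.pi * Real.exp (2 * t q.1.2))⁻¹.toNNReal (n q)

namespace unipotentDensity

variable (ℓ : ℕ)

theorem nonneg (t : Fin (ℓ+1) → ℝ) (n : LowerIdx ℓ → ℝ) : 0 ≤ unipotentDensity ℓ t n :=
  prod_nonneg fun _ _ => gaussianPDFReal_nonneg _ _ _

theorem integrable (t : Fin (ℓ+1) → ℝ) : Integrable (unipotentDensity ℓ t) :=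
  integrable_prod_gaussianPDFReal _ _

theorem integral_eq_one (t : Fin (ℓ+1) → ℝ) : ∫ n, unipotentDensity ℓ t n = 1 :=
  integral_prod_gaussianPDFReal_eq_one _ _ fun _ => by
    simp only [ne_eq, Real.toNNReal_eq_zero, not_le]
    positivity

theorem continuous_uncurry : Continuous (Function.uncurry (unipotentDensity ℓ)) := by
  simp only [Function.uncurry_def, unipotentDensity, gaussianPDFReal_zero_inv_two_pi_exp_two_mul]
  fun_prop

end unipotentDensity

theorem cexp_baxter_exponent_eq (ℓ : ℕ) (s : ℂ) (lam t : Fin (ℓ+1) → ℝ) (n : LowerIdx ℓ → ℝ) :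
    Complex.exp ((∑ i : Fin (ℓ+1), ∑ j ∈ Ioi i, ((t i - t j : ℝ) : ℂ))
        + (Complex.I * s + (ℓ : ℂ)/2) * (∑ j : Fin (ℓ+1), (t j : ℂ))
        + (∑ j : Fin (ℓ+1),
            (Complex.I * (lam j) - ((ℓ : ℂ)/2 + 1 - ((j : ℕ) + 1))) * (t j : ℂ))
        - (Real.pi : ℂ) * ∑ j : Fin (ℓ+1), (Real.exp (2 * t j) : ℂ)
        - (Real.pi : ℂ) * ∑ q : LowerIdx ℓ, (n q : ℂ)^2 * (Real.exp (2 * t q.1.2) : ℂ))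
      = unipotentDensity ℓ t n • ∏ j, Complex.exp ((Complex.I * s + Complex.I * lam j) * t j
          - Real.pi * Real.exp (2 * t j)) := by
  rw [baxter_exponent_eq, Complex.exp_add, Complex.exp_sum, Complex.exp_sum, Complex.real_smul,
    unipotentDensity, Complex.ofReal_prod]
  congr 1
  refine prod_congr rfl fun q _ => ?_
  rw [gaussianPDFReal_zero_inv_two_pi_exp_two_mul]
  norm_cast

theorem baxter_eigenvalue_L_factor (ℓ : ℕ) (s : ℂ) (hs : s.im < 0)
    (lam : Fin (ℓ+1) → ℝ) :
    Integrable (fun p : (Fin (ℓ+1) → ℝ) × (LowerIdx ℓ → ℝ) =>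
      Complex.exp ((∑ i : Fin (ℓ+1), ∑ j ∈ Ioi i, ((p.1 i - p.1 j : ℝ) : ℂ))
        + (Complex.I * s + (ℓ : ℂ)/2) * (∑ j : Fin (ℓ+1), (p.1 j : ℂ))
        + (∑ j : Fin (ℓ+1),
            (Complex.I * (lam j) - ((ℓ : ℂ)/2 + 1 - ((j : ℕ) + 1))) * (p.1 j : ℂ))
        - (Real.pi : ℂ) * ∑ j : Fin (ℓ+1), (Real.exp (2 * p.1 j) : ℂ)
        - (Real.pi : ℂ) * ∑ q : LowerIdx ℓ,
            (p.2 q : ℂ)^2 * (Real.exp (2 * p.1 q.1.2) : ℂ))) ∧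
    (2 : ℂ) ^ (ℓ+1) *
      (∫ p : (Fin (ℓ+1) → ℝ) × (LowerIdx ℓ → ℝ),
        Complex.exp ((∑ i : Fin (ℓ+1), ∑ j ∈ Ioi i, ((p.1 i - p.1 j : ℝ) : ℂ))
          + (Complex.I * s + (ℓ : ℂ)/2) * (∑ j : Fin (ℓ+1), (p.1 j : ℂ))
          + (∑ j : Fin (ℓ+1),
              (Complex.I * (lam j) - ((ℓ : ℂ)/2 + 1 - ((j : ℕ) + 1))) * (p.1 j : ℂ))
          - (Real.pi : ℂ) * ∑ j : Fin (ℓ+1), (Real.exp (2 * p.1 j) : ℂ)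
          - (Real.pi : ℂ) * ∑ q : LowerIdx ℓ,
              (p.2 q : ℂ)^2 * (Real.exp (2 * p.1 q.1.2) : ℂ)))
    = ∏ j : Fin (ℓ+1),
        Complex.exp (-((Complex.I * s + Complex.I * (lam j))/2) * (Real.log Real.pi : ℂ)) *
          Complex.Gamma ((Complex.I * s + Complex.I * (lam j))/2) := by
  have hc : ∀ j, 0 < (Complex.I * s + Complex.I * lam j).re := fun j => by simpa using hs
  have hf : Integrable (fun t : Fin (ℓ+1) → ℝ => ∏ j, Complex.exp
      ((Complex.I * s + Complex.I * lam j) * t j - Real.pi * Real.exp (2 * t j))) :=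
    Integrable.fintype_prod fun j => integrable_cexp_mul_sub_mul_exp_two_mul (hc j) Real.pi_pos
  have hg := (unipotentDensity.continuous_uncurry ℓ).aestronglyMeasurable (μ := volume.prod volume)
  have h_int := integrable_prod_smul_of_integral_eq_one hf hg (unipotentDensity.nonneg ℓ)
    (unipotentDensity.integrable ℓ) (unipotentDensity.integral_eq_one ℓ)
  have h_eq := integral_prod_smul_of_integral_eq_one hf hg (unipotentDensity.nonneg ℓ)
    (unipotentDensity.integrable ℓ) (unipotentDensity.integral_eq_one ℓ)
  simp_rw [cexp_baxter_exponent_eq, Measure.volume_eq_prod]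
  refine ⟨h_int, ?_⟩
  rw [h_eq, integral_fintype_prod_volume_eq_prod (fun j (τ : ℝ) => Complex.exp
      ((Complex.I * s + Complex.I * lam j) * τ - Real.pi * Real.exp (2 * τ))),
    ← prod_congr (s₁ := univ) rfl fun j _ =>
      two_mul_integral_cexp_mul_sub_mul_exp_two_mul (hc j) Real.pi_pos,
    prod_mul_distrib, prod_const, card_univ, Fintype.card_fin]
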